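/- arXiv:1608.06691 — 3 statements merged into one kernel-verified Lean document; each statement's English description precedes it below -/
import Mathlib

section
/- (Expression substitution preserves highest-order-derivative bounds) Let v = (v_1,…,v_n) be a vector of functions with v_l ≢ 0, let c̄ ∈ ℤ and offsets d_j satisfy: ν_{x_j}(v) < d_j - c̄ for j ∈ S and ν_{x_j}(v) ≤ d_j - c̄ otherwise, and d_j - c̄ ≥ 0 for j ∈ S (where S ⊇ {l, r}). Define ω₁ = y_r + (v_r/v_l)·x_l^{(d_l - c̄)}, where y_r is a new variable. Then ν_{x_j}(ω₁) < d_j - c̄ for j ∈ S \ {l}, ν_{x_l}(ω₁) = d_l - c̄, and ν_{x_j}(ω₁) ≤ d_j - c̄ for j ∉ S. -/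
/-!
Since `v l * w = v r` with `v l ≠ 0`, every variable of `w = v_r / v_l` already occurs in `v r`,
so `w` inherits the bounds on `ν_{x_j}(v)`. Over a domain the variables of a product are those of
its factors: `w · x_l^{(d_l - c̄)}` has the `x_j`-orders of `w`, except that its `x_l`-order is raised
to `d_l - c̄`. Adding `y_r` cannot cancel any `x`-variable.
-/

open MvPolynomial

/-- Formal variables for the expression substitution (ES) setting: `t`
(= `none`), the derivatives `x_j^{(k)}` (= `some (.inl (j, k))`), and the
derivatives `y_r^{(k)}` of the newly introduced variables
(= `some (.inr (r, k))`). -/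
abbrev EVar (n : ℕ) := Option ((Fin n × ℕ) ⊕ (Fin n × ℕ))

/-- Differential polynomials in these variables, with real coefficients. -/
abbrev EPoly (n : ℕ) := MvPolynomial (EVar n) ℝ

/-- The variable `x_j^{(k)}`. -/
noncomputable def Xv {n : ℕ} (j : Fin n) (k : ℕ) : EPoly n := X (some (Sum.inl (j, k)))

/-- The variable `y_r^{(k)}`. -/
noncomputable def Yv {n : ℕ} (r : Fin n) (k : ℕ) : EPoly n := X (some (Sum.inr (r, k)))

/-- The total time derivative operator `D`, acting by the chain rule. -/
noncomputable def Dop {n : ℕ} : EPoly n → EPoly n :=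
  MvPolynomial.mkDerivation ℝ fun v : EVar n =>
    match v with
    | none => (1 : EPoly n)
    | some (Sum.inl (j, k)) => Xv j (k + 1)
    | some (Sum.inr (r, k)) => Yv r (k + 1)

/-- `hodX w j`: highest order of a derivative of `x_j` occurring in `w`
(`⊥` = `-∞` if absent). -/
noncomputable def hodX {n : ℕ} (w : EPoly n) (j : Fin n) : WithBot ℤ :=
  w.vars.sup fun v =>
    match v with
    | some (Sum.inl (j', k)) => if j' = j then ((k : ℤ) : WithBot ℤ) else ⊥
    | _ => ⊥

/-- `hodY w r`: highest order of a derivative of `y_r` occurring in `w`. -/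
noncomputable def hodY {n : ℕ} (w : EPoly n) (r : Fin n) : WithBot ℤ :=
  w.vars.sup fun v =>
    match v with
    | some (Sum.inr (r', k)) => if r' = r then ((k : ℤ) : WithBot ℤ) else ⊥
    | _ => ⊥

theorem MvPolynomial.vars_mul_eq {R σ : Type*} [CommSemiring R] [NoZeroDivisors R]
    [DecidableEq σ] {p q : MvPolynomial σ R} (hp : p ≠ 0) (hq : q ≠ 0) :
    (p * q).vars = p.vars ∪ q.vars := by
  simp only [vars_def, degrees_mul_eq hp hq, Multiset.toFinset_add]

noncomputable def xOrder {n : ℕ} (j : Fin n) : EVar n → WithBot ℤ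
  | some (Sum.inl (j', k)) => if j' = j then ((k : ℤ) : WithBot ℤ) else ⊥
  | _ => ⊥

section hodX

variable {n : ℕ}

theorem hodX_eq_sup_vars (p : EPoly n) (j : Fin n) : hodX p j = p.vars.sup (xOrder j) := rfl

theorem hodX_add_le (p q : EPoly n) (j : Fin n) : hodX (p + q) j ≤ hodX p j ⊔ hodX q j := by
  classical
  simp only [hodX_eq_sup_vars, ← Finset.sup_union]
  exact Finset.sup_mono (vars_add_subset p q)

theorem hodX_neg (p : EPoly n) (j : Fin n) : hodX (-p) j = hodX p j := by
  simp only [hodX_eq_sup_vars, vars_neg]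

theorem hodX_add_of_hodX_eq_bot {p : EPoly n} {j : Fin n} (hp : hodX p j = ⊥) (q : EPoly n) :
    hodX (p + q) j = hodX q j := by
  refine le_antisymm ?_ ?_
  · simpa [hp] using hodX_add_le p q j
  · simpa [hodX_neg, hp] using hodX_add_le (p + q) (-p) j

theorem hodX_mul {p q : EPoly n} (hp : p ≠ 0) (hq : q ≠ 0) (j : Fin n) :
    hodX (p * q) j = hodX p j ⊔ hodX q j := by
  classical
  simp only [hodX_eq_sup_vars, vars_mul_eq hp hq, Finset.sup_union]

theorem hodX_Xv (i j : Fin n) (k : ℕ) :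
    hodX (Xv i k) j = if i = j then ((k : ℤ) : WithBot ℤ) else ⊥ := by
  simp only [hodX_eq_sup_vars, Xv, vars_X, Finset.sup_singleton, xOrder]

theorem hodX_Yv (r j : Fin n) (k : ℕ) : hodX (Yv r k) j = ⊥ := by
  simp only [hodX_eq_sup_vars, Yv, vars_X, Finset.sup_singleton, xOrder]

theorem Xv_ne_zero (i : Fin n) (k : ℕ) : Xv i k ≠ 0 := X_ne_zero _

end hodX

theorem stmt10_general {n : ℕ} (v : Fin n → EPoly n) (w : EPoly n) (d : Fin n → ℤ) (cb : ℤ)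
    (l r : Fin n) (hvl : v l ≠ 0) (hvr : v r ≠ 0)
    (hw : v l * w = v r)
    (hES1 : ∀ i j, v j ≠ 0 → hodX (v i) j < ((d j - cb : ℤ) : WithBot ℤ))
    (hES2 : ∀ i j, v j = 0 → hodX (v i) j ≤ ((d j - cb : ℤ) : WithBot ℤ))
    (hES3 : ∀ j, v j ≠ 0 → cb ≤ d j) :
    (∀ j, v j ≠ 0 → j ≠ l →
      hodX (Yv r 0 + w * Xv l (d l - cb).toNat) j < ((d j - cb : ℤ) : WithBot ℤ)) ∧
    hodX (Yv r 0 + w * Xv l (d l - cb).toNat) l = ((d l - cb : ℤ) : WithBot ℤ) ∧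
    (∀ j, v j = 0 →
      hodX (Yv r 0 + w * Xv l (d l - cb).toNat) j ≤ ((d j - cb : ℤ) : WithBot ℤ)) := by
  have hw0 : w ≠ 0 := by rintro rfl; exact hvr (by rw [← hw, mul_zero])
  have hwr (j : Fin n) : hodX w j ≤ hodX (v r) j := by
    rw [← hw, hodX_mul hvl hw0]; exact le_sup_right
  have hω (j : Fin n) : hodX (Yv r 0 + w * Xv l (d l - cb).toNat) j =
      hodX w j ⊔ if l = j then (((d l - cb).toNat : ℤ) : WithBot ℤ) else ⊥ := by
    rw [hodX_add_of_hodX_eq_bot (hodX_Yv r j 0), hodX_mul hw0 (Xv_ne_zero l _), hodX_Xv]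
  refine ⟨fun j hj hjl => ?_, ?_, fun j hj => ?_⟩
  · rw [hω, if_neg (Ne.symm hjl), sup_bot_eq]
    exact (hwr j).trans_lt (hES1 r j hj)
  · rw [hω, if_pos rfl, Int.toNat_of_nonneg (sub_nonneg.mpr (hES3 l hvl))]
    exact sup_eq_right.mpr ((hwr l).trans (hES1 r l hvl).le)
  · have hjl : l ≠ j := by rintro rfl; exact hvl hj
    rw [hω, if_neg hjl, sup_bot_eq]
    exact (hwr j).trans (hES2 r j hj)

/-- **ES lemma (Lemma on `ω₁`).** Let `v` be a kernel-type vector with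
support `S = {j : v j ≠ 0}`, `l, r ∈ S` with `r ≠ l`, let `w` denote the
quotient `v_r/v_l` (i.e. `v l * w = v r`), and assume the ES conditions:
`ν_{x_j}(v) < d j - c̄` for `j ∈ S`, `ν_{x_j}(v) ≤ d j - c̄` otherwise, and
`d j - c̄ ≥ 0` for `j ∈ S`. Then `ω₁ = y_r + (v_r/v_l)·x_l^{(d_l - c̄)}`
satisfies `ν_{x_j}(ω₁) < d j - c̄` for `j ∈ S \ {l}`,
`ν_{x_l}(ω₁) = d l - c̄`, and `ν_{x_j}(ω₁) ≤ d j - c̄` for `j ∉ S`. -/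
theorem stmt10 {n : ℕ} (v : Fin n → EPoly n) (w : EPoly n) (d : Fin n → ℤ) (cb : ℤ)
    (l r : Fin n) (hvl : v l ≠ 0) (hvr : v r ≠ 0) (hrl : r ≠ l)
    (hw : v l * w = v r)
    (hvY : ∀ i r', hodY (v i) r' = ⊥)
    (hES1 : ∀ i j, v j ≠ 0 → hodX (v i) j < ((d j - cb : ℤ) : WithBot ℤ))
    (hES2 : ∀ i j, v j = 0 → hodX (v i) j ≤ ((d j - cb : ℤ) : WithBot ℤ))
    (hES3 : ∀ j, v j ≠ 0 → cb ≤ d j) :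
    (∀ j, v j ≠ 0 → j ≠ l →
      hodX (Yv r 0 + w * Xv l (d l - cb).toNat) j < ((d j - cb : ℤ) : WithBot ℤ)) ∧
    hodX (Yv r 0 + w * Xv l (d l - cb).toNat) l = ((d l - cb : ℤ) : WithBot ℤ) ∧
    (∀ j, v j = 0 →
      hodX (Yv r 0 + w * Xv l (d l - cb).toNat) j ≤ ((d j - cb : ℤ) : WithBot ℤ)) :=
  stmt10_general v w d cb l r hvl hvr hw hES1 hES2 hES3
end

section
/- Under the hypotheses of the previous lemma, for any integer c_i ≤ c̄, the (c̄ - c_i)-th total derivative ω₂ = ω₁^{(c̄ - c_i)} of ω₁ = y_r + (v_r/v_l)·x_l^{(d_l - c̄)} satisfies: ν_{x_j}(ω₂) < d_j - c_i for j ∈ S \ {l}, and ν_{x_j}(ω₂) ≤ d_j - c_i otherwise; moreover ν_{y_r}(ω₂) = c̄ - c_i. -/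
open MvPolynomial

/-!
The order `ν` of a variable is read off from supported subalgebras: `ν(q) ≤ M` iff `q` only
involves variables of order at most `M`. A derivation maps the subalgebra generated by the
variables in `s` into the one generated by those in `t ⊇ s` as soon as it does so on the
generators, and `D x_j^{(k)} = x_j^{(k+1)}`, so each total derivative raises every `ν` by at
most one. Over a domain, `v_l · w = v_r` forces `w` to involve only variables of `v_r`, so
`ν_{x_j}(ω₁)` is bounded by the hypotheses on `v_r` together with the single factor
`x_l^{(d_l - c̄)}`. Finally `ω₁ - y_r` is free of `y`'s, hence so are its derivatives, and
`D^p ω₁ = y_r^{(p)} + (y-free)` has `ν_{y_r} = p` exactly.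
-/

namespace MvPolynomial

variable {R σ : Type*}

theorem vars_subset_vars_mul_left [CommSemiring R] [NoZeroDivisors R] {p : MvPolynomial σ R}
    (hp : p ≠ 0) (q : MvPolynomial σ R) : q.vars ⊆ (p * q).vars := by
  classical
  rcases eq_or_ne q 0 with rfl | hq
  · simp
  simp only [vars_def, degrees_mul_eq hp hq, Multiset.toFinset_add, Finset.subset_union_right]

theorem sup_vars_le_iff_mem_supported [CommSemiring R] {α : Type*} [SemilatticeSup α] [OrderBot α]
    (f : σ → α) (p : MvPolynomial σ R) (M : α) :
    p.vars.sup f ≤ M ↔ p ∈ supported R {i | f i ≤ M} := by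
  rw [Finset.sup_le_iff, mem_supported]
  rfl

theorem sup_vars_X_add [CommSemiring R] [Nontrivial R] [DecidableEq σ] {α : Type*}
    [SemilatticeSup α] [OrderBot α] (f : σ → α) {i : σ} {p : MvPolynomial σ R}
    (hi : i ∉ p.vars) : (X i + p).vars.sup f = f i ⊔ p.vars.sup f := by
  rw [vars_add_of_disjoint (by simpa [vars_X]), vars_X, Finset.sup_union, Finset.sup_singleton]

theorem derivation_mem_supported [CommSemiring R]
    (D : Derivation R (MvPolynomial σ R) (MvPolynomial σ R)) {s t : Set σ} (hst : s ⊆ t)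
    (hX : ∀ i ∈ s, D (X i) ∈ supported R t) {p : MvPolynomial σ R} (hp : p ∈ supported R s) :
    D p ∈ supported R t := by
  rw [supported_eq_adjoin_X] at hp
  induction hp using Algebra.adjoin_induction with
  | mem x hx =>
    obtain ⟨i, hi, rfl⟩ := hx
    exact hX i hi
  | algebraMap r => rw [D.map_algebraMap]; exact zero_mem _
  | add x y _ _ hx hy => rw [map_add]; exact add_mem hx hy
  | mul x y hx' hy' hx hy =>
    rw [← supported_eq_adjoin_X] at hx' hy'
    rw [D.leibniz, smul_eq_mul, smul_eq_mul]
    exact add_mem (mul_mem (supported_mono hst hx') hy) (mul_mem (supported_mono hst hy') hx)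

end MvPolynomial

open Function

def ordX {n : ℕ} (j : Fin n) : EVar n → WithBot ℤ
  | some (Sum.inl (j', k)) => if j' = j then ((k : ℤ) : WithBot ℤ) else ⊥
  | _ => ⊥

def ordY {n : ℕ} (r : Fin n) : EVar n → WithBot ℤ
  | some (Sum.inr (r', k)) => if r' = r then ((k : ℤ) : WithBot ℤ) else ⊥
  | _ => ⊥

theorem hodX_eq_sup_ordX {n : ℕ} (w : EPoly n) (j : Fin n) : hodX w j = w.vars.sup (ordX j) :=
  rfl

theorem hodY_eq_sup_ordY {n : ℕ} (w : EPoly n) (r : Fin n) : hodY w r = w.vars.sup (ordY r) :=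
  rfl

section TotalDerivative

variable {n : ℕ}

theorem sup_vars_Dop_le {f : EVar n → WithBot ℤ}
    (hf : ∀ v, Dop (X v) ∈ supported ℝ {u | f u ≤ f v + 1}) (q : EPoly n) :
    (Dop q).vars.sup f ≤ q.vars.sup f + 1 := by
  have hq := (sup_vars_le_iff_mem_supported f q _).1 le_rfl
  refine (sup_vars_le_iff_mem_supported f _ _).2 (derivation_mem_supported _ ?_ ?_ hq)
  · exact fun u (hu : f u ≤ _) => hu.trans (le_add_of_nonneg_right zero_le_one)
  · exact fun v (hv : f v ≤ _) => supported_mono (fun u (hu : f u ≤ _) =>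
      hu.trans (add_le_add_left hv 1)) (hf v)

theorem sup_vars_Dop_iterate_le {f : EVar n → WithBot ℤ}
    (hf : ∀ v, Dop (X v) ∈ supported ℝ {u | f u ≤ f v + 1}) (q : EPoly n) (p : ℕ) :
    (Dop^[p] q).vars.sup f ≤ q.vars.sup f + ((p : ℤ) : WithBot ℤ) := by
  induction p with
  | zero => simp
  | succ p ih =>
    rw [iterate_succ_apply']
    calc (Dop (Dop^[p] q)).vars.sup f ≤ (Dop^[p] q).vars.sup f + 1 := sup_vars_Dop_le hf _
      _ ≤ q.vars.sup f + ((p : ℤ) : WithBot ℤ) + 1 := add_le_add_left ih 1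
      _ = q.vars.sup f + (((p + 1 : ℕ) : ℤ) : WithBot ℤ) := by push_cast; rw [add_assoc]

theorem Dop_X_mem_supported_ordX (j : Fin n) (v : EVar n) :
    Dop (X v) ∈ supported ℝ {u | ordX j u ≤ ordX j v + 1} := by
  rcases v with _ | ⟨j', k⟩ | ⟨r', k⟩
  · simp [Dop, one_mem]
  · rw [Dop, mkDerivation_X]
    refine X_mem_supported.2 ?_
    simp only [Set.mem_ofPred_eq, ordX]
    split_ifs <;> simp
  · rw [Dop, mkDerivation_X]
    exact X_mem_supported.2 (by simp [ordX])

theorem Dop_X_mem_supported_ordY (r : Fin n) (v : EVar n) :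
    Dop (X v) ∈ supported ℝ {u | ordY r u ≤ ordY r v + 1} := by
  rcases v with _ | ⟨j', k⟩ | ⟨r', k⟩
  · simp [Dop, one_mem]
  · rw [Dop, mkDerivation_X]
    exact X_mem_supported.2 (by simp [ordY])
  · rw [Dop, mkDerivation_X]
    refine X_mem_supported.2 ?_
    simp only [Set.mem_ofPred_eq, ordY]
    split_ifs <;> simp

theorem hodX_Dop_iterate_le_of_le {q : EPoly n} {j : Fin n} {c : ℤ}
    (h : hodX q j ≤ (c : WithBot ℤ)) (p : ℕ) :
    hodX (Dop^[p] q) j ≤ ((c + p : ℤ) : WithBot ℤ) :=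
  calc hodX (Dop^[p] q) j ≤ hodX q j + ((p : ℤ) : WithBot ℤ) :=
        sup_vars_Dop_iterate_le (Dop_X_mem_supported_ordX j) q p
    _ ≤ ((c + p : ℤ) : WithBot ℤ) := by rw [WithBot.coe_add]; exact add_le_add_left h _

theorem hodX_Dop_iterate_lt_of_lt {q : EPoly n} {j : Fin n} {c : ℤ}
    (h : hodX q j < (c : WithBot ℤ)) (p : ℕ) :
    hodX (Dop^[p] q) j < ((c + p : ℤ) : WithBot ℤ) :=
  calc hodX (Dop^[p] q) j ≤ hodX q j + ((p : ℤ) : WithBot ℤ) :=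
        sup_vars_Dop_iterate_le (Dop_X_mem_supported_ordX j) q p
    _ < ((c + p : ℤ) : WithBot ℤ) := by
      rw [WithBot.coe_add]; exact WithBot.add_lt_add_right WithBot.coe_ne_bot h

theorem hodY_Dop_iterate_eq_bot {q : EPoly n} {r : Fin n} (h : hodY q r = ⊥) (p : ℕ) :
    hodY (Dop^[p] q) r = ⊥ :=
  le_bot_iff.1 <| (sup_vars_Dop_iterate_le (Dop_X_mem_supported_ordY r) q p).trans_eq <| by
    rw [← hodY_eq_sup_ordY, h, WithBot.bot_add]

theorem Dop_iterate_add (p : ℕ) (a b : EPoly n) :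
    Dop^[p] (a + b) = Dop^[p] a + Dop^[p] b :=
  iterate_map_add (mkDerivation ℝ _) p a b

theorem Dop_iterate_Yv (r : Fin n) (p : ℕ) : Dop^[p] (Yv r 0) = Yv r p := by
  induction p with
  | zero => rfl
  | succ p ih => rw [iterate_succ_apply', ih, Dop, Yv, mkDerivation_X]

end TotalDerivative

section OmegaOne

variable {n : ℕ} (r l : Fin n) (w : EPoly n) (m : ℕ)

theorem hodX_Yv_add_mul_Xv_le {j : Fin n} {M : WithBot ℤ} (hw : hodX w j ≤ M)
    (hx : ordX j (some (Sum.inl (l, m))) ≤ M) : hodX (Yv r 0 + w * Xv l m) j ≤ M := by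
  rw [hodX_eq_sup_ordX, sup_vars_le_iff_mem_supported] at hw ⊢
  exact add_mem (X_mem_supported.2 (by simp [ordX])) (mul_mem hw (X_mem_supported.2 hx))

theorem hodY_Dop_iterate_Yv_add_mul_Xv (hw : hodY w r = ⊥) (p : ℕ) :
    hodY (Dop^[p] (Yv r 0 + w * Xv l m)) r = ((p : ℤ) : WithBot ℤ) := by
  have hB : hodY (w * Xv l m) r = ⊥ := by
    rw [hodY_eq_sup_ordY, ← le_bot_iff, sup_vars_le_iff_mem_supported] at hw ⊢
    exact mul_mem hw (X_mem_supported.2 (by simp [ordY]))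
  have hB' := hodY_Dop_iterate_eq_bot hB p
  have hnot : (some (Sum.inr (r, p)) : EVar n) ∉ (Dop^[p] (w * Xv l m)).vars := by
    intro hmem
    have h := Finset.le_sup (f := ordY r) hmem
    rw [← hodY_eq_sup_ordY, hB'] at h
    simp [ordY] at h
  rw [Dop_iterate_add, Dop_iterate_Yv, hodY_eq_sup_ordY, Yv, sup_vars_X_add _ hnot, ← hodY_eq_sup_ordY, hB']
  simp [ordY]

end OmegaOne

theorem stmt11_general {n : ℕ} (v : Fin n → EPoly n) (w : EPoly n) (d : Fin n → ℤ) (cb : ℤ)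
    (l r : Fin n) (hvl : v l ≠ 0)
    (hw : v l * w = v r)
    (hwY : ∀ r', hodY w r' = ⊥)
    (hES1 : ∀ i j, v j ≠ 0 → hodX (v i) j < ((d j - cb : ℤ) : WithBot ℤ))
    (hES2 : ∀ i j, v j = 0 → hodX (v i) j ≤ ((d j - cb : ℤ) : WithBot ℤ))
    (hES3 : ∀ j, v j ≠ 0 → cb ≤ d j)
    (ci : ℤ) (hci : ci ≤ cb) :
    (∀ j, v j ≠ 0 → j ≠ l →
      hodX (Dop^[(cb - ci).toNat] (Yv r 0 + w * Xv l (d l - cb).toNat)) j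
        < ((d j - ci : ℤ) : WithBot ℤ)) ∧
    (∀ j, (v j = 0 ∨ j = l) →
      hodX (Dop^[(cb - ci).toNat] (Yv r 0 + w * Xv l (d l - cb).toNat)) j
        ≤ ((d j - ci : ℤ) : WithBot ℤ)) ∧
    hodY (Dop^[(cb - ci).toNat] (Yv r 0 + w * Xv l (d l - cb).toNat)) r
        = ((cb - ci : ℤ) : WithBot ℤ) := by
  set m := (d l - cb).toNat
  set p := (cb - ci).toNat
  have hshift : ∀ j, d j - ci = d j - cb + p := fun j => by omega
  have hw_le : ∀ j, hodX w j ≤ hodX (v r) j := fun j =>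
    Finset.sup_mono (hw ▸ vars_subset_vars_mul_left hvl w)
  have hx_off : ∀ j, j ≠ l → ordX j (some (Sum.inl (l, m))) = ⊥ := fun j hjl => by
    simp [ordX, Ne.symm hjl]
  refine ⟨fun j hvj hjl => ?_, fun j hj => ?_, ?_⟩
  · have hω₁ := hodX_Yv_add_mul_Xv_le r l w m le_rfl ((hx_off j hjl).trans_le bot_le)
    rw [hshift]
    exact hodX_Dop_iterate_lt_of_lt (hω₁.trans_lt ((hw_le j).trans_lt (hES1 r j hvj))) p
  · have hw_bound : hodX w j ≤ ((d j - cb : ℤ) : WithBot ℤ) :=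
      (hw_le j).trans (hj.elim (hES2 r j) fun hjl => hjl ▸ (hES1 r l hvl).le)
    have hx_bound : ordX j (some (Sum.inl (l, m))) ≤ ((d j - cb : ℤ) : WithBot ℤ) := by
      rcases hj with hvj | rfl
      · exact (hx_off j fun hjl => hvl (hjl ▸ hvj)).trans_le bot_le
      · simp only [ordX, if_true, WithBot.coe_le_coe, m]
        have := hES3 j hvl
        omega
    rw [hshift]
    exact hodX_Dop_iterate_le_of_le (hodX_Yv_add_mul_Xv_le r l w m hw_bound hx_bound) p
  · rw [hodY_Dop_iterate_Yv_add_mul_Xv r l w m (hwY r), Int.toNat_of_nonneg (by omega)]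

/-- **ES lemma (Lemma on `ω₂`).** Under the hypotheses of the previous lemma,
for any `c_i ≤ c̄` the `(c̄ - c_i)`-th total derivative
`ω₂ = D^{c̄ - c_i} ω₁` of `ω₁ = y_r + (v_r/v_l)·x_l^{(d_l - c̄)}` satisfies
`ν_{x_j}(ω₂) < d j - c_i` for `j ∈ S \ {l}`, `ν_{x_j}(ω₂) ≤ d j - c_i`
otherwise, and `ν_{y_r}(ω₂) = c̄ - c_i`. -/
theorem stmt11 {n : ℕ} (v : Fin n → EPoly n) (w : EPoly n) (d : Fin n → ℤ) (cb : ℤ)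
    (l r : Fin n) (hvl : v l ≠ 0) (hvr : v r ≠ 0) (hrl : r ≠ l)
    (hw : v l * w = v r)
    (hvY : ∀ i r', hodY (v i) r' = ⊥)
    (hwY : ∀ r', hodY w r' = ⊥)
    (hES1 : ∀ i j, v j ≠ 0 → hodX (v i) j < ((d j - cb : ℤ) : WithBot ℤ))
    (hES2 : ∀ i j, v j = 0 → hodX (v i) j ≤ ((d j - cb : ℤ) : WithBot ℤ))
    (hES3 : ∀ j, v j ≠ 0 → cb ≤ d j)
    (ci : ℤ) (hci : ci ≤ cb) :
    (∀ j, v j ≠ 0 → j ≠ l →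
      hodX (Dop^[(cb - ci).toNat] (Yv r 0 + w * Xv l (d l - cb).toNat)) j
        < ((d j - ci : ℤ) : WithBot ℤ)) ∧
    (∀ j, (v j = 0 ∨ j = l) →
      hodX (Dop^[(cb - ci).toNat] (Yv r 0 + w * Xv l (d l - cb).toNat)) j
        ≤ ((d j - ci : ℤ) : WithBot ℤ)) ∧
    hodY (Dop^[(cb - ci).toNat] (Yv r 0 + w * Xv l (d l - cb).toNat)) r
        = ((cb - ci : ℤ) : WithBot ℤ) :=
  stmt11_general v w d cb l r hvl hw hwY hES1 hES2 hES3 ci hci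
end

section
/- Let J be the n×n System Jacobian of a DAE with valid offsets (c;d) and let v ∈ ker J with v_l ≢ 0. Suppose for r ∈ S\{l} the substitution identity x_r^{(d_r - c̄)} = y_r + (v_r/v_l)·x_l^{(d_l - c̄)} holds, with c̄ ≥ c_i. Then by Griewank's Lemma, ∂x_r^{(d_r - c_i)}/∂x_l^{(d_l - c_i)} = v_r/v_l, and consequently the substituted equation f̄_i satisfies ∂f̄_i/∂x_l^{(d_l - c_i)} = J_{il} + Σ_{r∈S\{l}} J_{ir}·(v_r/v_l) = (1/v_l)·(J v)_i = 0. -/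
/-!
The total derivative `D` satisfies `[∂/∂x_j^{(k+1)}, D] = ∂/∂x_j^{(k)}`. Iterating this
gives Griewank's Lemma: if `p` involves `x_j` only up to order `k`, then
`∂(D^m p)/∂x_j^{(k+m)} = ∂p/∂x_j^{(k)}`. Applied to `y_r + (v_r/v_l) x_l^{(d_l - c̄)}`,
whose coefficient `v_r/v_l` is free of `x_l^{(≥ d_l - c̄)}`, it gives the first claim.

For the second, the chain rule writes `v_l · ∂f̄_i/∂x_l^{(d_l - c_i)}` as the image under the
substitution of `∑_{v_r ≠ 0} J_{ir} v_r = (J v)_i = 0`; here `v` itself is left unchanged by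
the substitution, because it involves `x_r` only below order `d_r - c̄ ≤ d_r - c_i`.
-/

open MvPolynomial

/-- The System Jacobian: `J i j = ∂f_i/∂x_j^{(d_j - c_i)}` (zero when
`d j - c i < 0` or when `d j - c i` exceeds the signature entry). -/
noncomputable def sysJacE {n : ℕ} (f : Fin n → EPoly n) (c d : Fin n → ℕ) :
    Matrix (Fin n) (Fin n) (EPoly n) :=
  fun i j => if c i ≤ d j then pderiv (some (Sum.inl (j, d j - c i))) (f i) else 0

open scoped Classical in
/-- The ES substitution for equation `i`: each variable `x_r^{(d_r - c_i)}`
with `r ∈ S \ {l}` is replaced by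
`(y_r + (v_r/v_l)·x_l^{(d_l - c̄)})^{(c̄ - c_i)}`, where `w r` denotes the
quotient `v_r/v_l`; all other variables are left unchanged. -/
noncomputable def substMap {n : ℕ} (v w : Fin n → EPoly n) (c d : Fin n → ℕ)
    (cb : ℕ) (l i : Fin n) : EVar n → EPoly n :=
  fun var =>
    match var with
    | some (Sum.inl (r, k)) =>
        if v r ≠ 0 ∧ r ≠ l ∧ k = d r - c i then
          Dop^[cb - c i] (Yv r 0 + w r * Xv l (d l - cb))
        else X var
    | _ => X var

section ChainRule

variable {σ R : Type*} [CommRing R]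

lemma aeval_eq_self_of_forall_mem_vars {g : σ → MvPolynomial σ R} {p : MvPolynomial σ R}
    (h : ∀ t ∈ p.vars, g t = X t) : aeval g p = p := by
  conv_rhs => rw [← aeval_X_left_apply p]
  rw [aeval_def, aeval_def, ← coe_eval₂Hom, ← coe_eval₂Hom]
  exact eval₂Hom_congr' rfl (fun t ht _ => h t ht) rfl

lemma pderiv_aeval_eq_sum [DecidableEq σ] {g : σ → MvPolynomial σ R} {T : Finset σ}
    (hg : ∀ t ∉ T, g t = X t) {u : σ} (hu : u ∈ T) (p : MvPolynomial σ R) :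
    pderiv u (aeval g p) = ∑ t ∈ T, aeval g (pderiv t p) * pderiv u (g t) := by
  induction p using MvPolynomial.induction_on with
  | C a => simp
  | add p q hp hq => simp only [map_add, hp, hq, add_mul, Finset.sum_add_distrib]
  | mul_X p s hp =>
    have hs : ∑ t ∈ T, (if s = t then pderiv u (g t) else 0) = pderiv u (g s) := by
      rw [Finset.sum_ite_eq]
      split_ifs with hsT
      · rfl
      · rw [hg s hsT, pderiv_X_of_ne (ne_of_mem_of_not_mem hu hsT).symm]
    simp only [Derivation.leibniz, pderiv_X, map_add, map_mul, aeval_X, smul_eq_mul, hp,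
      Pi.single_apply, add_mul, Finset.sum_add_distrib]
    rw [← hs, Finset.mul_sum, Finset.mul_sum, ← Finset.sum_add_distrib,
      ← Finset.sum_add_distrib]
    refine Finset.sum_congr rfl fun t _ => ?_
    split_ifs <;> simp only [map_one, map_zero] <;> ring

lemma Derivation.map_eq_zero_of_mul_eq {R A : Type*} [CommRing R] [CommRing A]
    [NoZeroDivisors A] [Algebra R A] (D : Derivation R A A) {a b c : A} (habc : a * b = c)
    (ha : a ≠ 0) (hDa : D a = 0) (hDc : D c = 0) : D b = 0 := by
  have h := D.leibniz a b
  rw [habc, hDc, hDa, smul_zero, add_zero, smul_eq_mul] at h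
  exact (mul_eq_zero.mp h.symm).resolve_left ha

end ChainRule

section TotalDerivative

variable {n : ℕ}

abbrev xVar (j : Fin n) (k : ℕ) : EVar n := some (Sum.inl (j, k))

noncomputable def totalDeriv (n : ℕ) : Derivation ℝ (EPoly n) (EPoly n) :=
  mkDerivation ℝ fun v : EVar n =>
    match v with
    | none => (1 : EPoly n)
    | some (Sum.inl (j, k)) => Xv j (k + 1)
    | some (Sum.inr (r, k)) => Yv r (k + 1)

lemma coe_totalDeriv : ⇑(totalDeriv n) = Dop := rfl

lemma lie_pderiv_succ_totalDeriv (j : Fin n) (k : ℕ) :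
    ⁅pderiv (R := ℝ) (xVar j (k + 1)), totalDeriv n⁆ = pderiv (xVar j k) := by
  classical
  refine derivation_ext fun var => ?_
  rw [Derivation.commutator_apply, pderiv_X, Pi.single_apply, apply_ite (totalDeriv n),
    Derivation.map_one_eq_zero, map_zero, ite_self, sub_zero]
  rcases var with _ | (⟨j', k'⟩ | ⟨r, k'⟩) <;>
    simp [totalDeriv, mkDerivation_X, pderiv_X, Pi.single_apply, Xv, Yv]

lemma Dop_zero : Dop (0 : EPoly n) = 0 := (totalDeriv n).map_zero

lemma pderiv_succ_Dop (j : Fin n) (k : ℕ) (p : EPoly n) :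
    pderiv (xVar j (k + 1)) (Dop p) = Dop (pderiv (xVar j (k + 1)) p) + pderiv (xVar j k) p := by
  have h :=
    Derivation.commutator_apply (D1 := pderiv (xVar j (k + 1))) (D2 := totalDeriv n) (a := p)
  rw [lie_pderiv_succ_totalDeriv, coe_totalDeriv] at h
  rw [h, add_sub_cancel]

end TotalDerivative

section Griewank

variable {n : ℕ}

def XOrderLE (p : EPoly n) (j : Fin n) (k : ℕ) : Prop :=
  ∀ k', k < k' → pderiv (xVar j k') p = 0

lemma XOrderLE.map_Dop {p : EPoly n} {j : Fin n} {k : ℕ} (h : XOrderLE p j k) :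
    XOrderLE (Dop p) j (k + 1) := by
  rintro (_ | k') hk'
  · omega
  rw [pderiv_succ_Dop, h _ (by omega), h _ (by omega), Dop_zero, zero_add]

lemma XOrderLE.iterate_Dop {p : EPoly n} {j : Fin n} {k : ℕ} (h : XOrderLE p j k) (m : ℕ) :
    XOrderLE (Dop^[m] p) j (k + m) := by
  induction m with
  | zero => exact h
  | succ m ih => rw [Function.iterate_succ_apply']; exact ih.map_Dop

/-- Griewank's Lemma. -/
lemma pderiv_iterate_Dop {p : EPoly n} {j : Fin n} {k : ℕ} (h : XOrderLE p j k) (m : ℕ) :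
    pderiv (xVar j (k + m)) (Dop^[m] p) = pderiv (xVar j k) p := by
  induction m with
  | zero => rfl
  | succ m ih =>
    rw [Function.iterate_succ_apply', ← add_assoc, pderiv_succ_Dop, h.iterate_Dop m _ (by omega),
      Dop_zero, zero_add, ih]

lemma pderiv_iterate_Dop_substitution {a : EPoly n} {l : Fin n} {k : ℕ}
    (ha : ∀ k', k ≤ k' → pderiv (xVar l k') a = 0) (r : Fin n) (m : ℕ) :
    pderiv (xVar l (k + m)) (Dop^[m] (Yv r 0 + a * Xv l k)) = a := by
  have hX : ∀ k', pderiv (xVar l k') (Xv l k) = if k = k' then 1 else 0 := by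
    intro k'
    split_ifs with h
    · rw [h]; exact pderiv_X_self _
    · exact pderiv_X_of_ne (by simpa using h)
  have hY : ∀ k', pderiv (xVar l k') (Yv r 0) = 0 := fun k' => pderiv_X_of_ne (by simp)
  have horder : XOrderLE (Yv r 0 + a * Xv l k) l k := fun k' hk' => by
    rw [map_add, pderiv_mul, hY, hX, ha k' hk'.le, if_neg hk'.ne]; ring
  rw [pderiv_iterate_Dop horder, map_add, pderiv_mul, hY, hX, ha k le_rfl, if_pos rfl]; ring

end Griewank

section Substitution

variable {n : ℕ}

lemma coe_le_hodX_of_mem_vars {p : EPoly n} {j : Fin n} {k : ℕ} (h : xVar j k ∈ p.vars) :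
    ((k : ℤ) : WithBot ℤ) ≤ hodX p j := by
  unfold hodX
  convert Finset.le_sup h
  simp

lemma xVar_notMem_vars_of_hodX_lt {p : EPoly n} {j : Fin n} {K : ℤ} (h : hodX p j < K)
    {k : ℕ} (hk : K ≤ k) : xVar j k ∉ p.vars := fun hmem =>
  (h.trans_le ((WithBot.coe_le_coe.mpr hk).trans (coe_le_hodX_of_mem_vars hmem))).false

lemma mul_pderiv_iterate_Dop_substitution {v w : Fin n → EPoly n} {d : Fin n → ℕ}
    {cb ci : ℕ} {l : Fin n} (hvl : v l ≠ 0) (hw : ∀ j, v l * w j = v j)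
    (hv : ∀ q, hodX (v q) l < (((d l : ℤ) - (cb : ℤ) : ℤ) : WithBot ℤ)) (hcb : cb ≤ d l)
    (hci : ci ≤ cb) (r : Fin n) :
    v l * pderiv (xVar l (d l - ci)) (Dop^[cb - ci] (Yv r 0 + w r * Xv l (d l - cb))) = v r := by
  have hvk : ∀ q k, d l - cb ≤ k → pderiv (xVar l k) (v q) = 0 := fun q k hk =>
    pderiv_eq_zero_of_notMem_vars (xVar_notMem_vars_of_hodX_lt (hv q) (by omega))
  rw [show d l - ci = d l - cb + (cb - ci) by omega, pderiv_iterate_Dop_substitution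
    (fun k hk => (pderiv _).map_eq_zero_of_mul_eq (hw r) hvl (hvk l k hk) (hvk r k hk)), hw]

open scoped Classical in
noncomputable def substVars (v : Fin n → EPoly n) (c d : Fin n → ℕ) (i : Fin n) :
    Finset (EVar n) :=
  (Finset.univ.filter fun r => v r ≠ 0).image fun r => xVar r (d r - c i)

variable {v w : Fin n → EPoly n} {c d : Fin n → ℕ} {cb : ℕ} {l i : Fin n}

lemma substMap_eq_X_of_notMem_substVars {t : EVar n} (ht : t ∉ substVars v c d i) :
    substMap v w c d cb l i t = X t := by
  rcases t with _ | (⟨r, k⟩ | ⟨r, k⟩)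
  · rfl
  · refine if_neg fun ⟨hr, _, hk⟩ => ht ?_
    exact Finset.mem_image.mpr ⟨r, by simpa using hr, by rw [hk]⟩
  · rfl

lemma substMap_xVar_self (k : ℕ) : substMap v w c d cb l i (xVar l k) = X (xVar l k) :=
  if_neg fun h => h.2.1 rfl

lemma substMap_xVar_of_ne {r : Fin n} (hr : v r ≠ 0) (hrl : r ≠ l) :
    substMap v w c d cb l i (xVar r (d r - c i))
      = Dop^[cb - c i] (Yv r 0 + w r * Xv l (d l - cb)) :=
  if_pos ⟨hr, hrl, rfl⟩

lemma aeval_substMap_of_hodX_lt {p : EPoly n}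
    (hp : ∀ r, v r ≠ 0 → hodX p r < (((d r : ℤ) - (cb : ℤ) : ℤ) : WithBot ℤ))
    (hci : c i ≤ cb) :
    aeval (substMap v w c d cb l i) p = p := by
  refine aeval_eq_self_of_forall_mem_vars fun t ht => ?_
  rcases t with _ | (⟨r, k⟩ | ⟨r, k⟩)
  · rfl
  · refine if_neg fun ⟨hr, _, hk⟩ => xVar_notMem_vars_of_hodX_lt (hp r hr) ?_ ht
    omega
  · rfl

lemma mul_pderiv_substMap_xVar (hvl : v l ≠ 0) (hw : ∀ j, v l * w j = v j)
    (hv : ∀ q, hodX (v q) l < (((d l : ℤ) - (cb : ℤ) : ℤ) : WithBot ℤ)) (hcb : cb ≤ d l)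
    (hci : c i ≤ cb) {r : Fin n} (hr : v r ≠ 0) :
    v l * pderiv (xVar l (d l - c i)) (substMap v w c d cb l i (xVar r (d r - c i))) = v r := by
  by_cases hrl : r = l
  · rw [hrl, substMap_xVar_self, pderiv_X_self, mul_one]
  · rw [substMap_xVar_of_ne hr hrl]
    exact mul_pderiv_iterate_Dop_substitution hvl hw hv hcb hci r

open scoped Classical in
lemma pderiv_aeval_substMap (hvl : v l ≠ 0) (p : EPoly n) :
    pderiv (xVar l (d l - c i)) (aeval (substMap v w c d cb l i) p)
      = ∑ r ∈ Finset.univ.filter (v · ≠ 0), aeval (substMap v w c d cb l i)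
          (pderiv (xVar r (d r - c i)) p)
          * pderiv (xVar l (d l - c i)) (substMap v w c d cb l i (xVar r (d r - c i))) := by
  rw [pderiv_aeval_eq_sum (fun _ => substMap_eq_X_of_notMem_substVars)
    (Finset.mem_image_of_mem _ (Finset.mem_filter.mpr ⟨Finset.mem_univ l, hvl⟩)),
    substVars, Finset.sum_image]
  exact fun r _ r' _ h => (Prod.mk.inj (Sum.inl_injective (Option.some_injective _ h))).1

end Substitution

theorem stmt12_general {n : ℕ} (f v w : Fin n → EPoly n) (c d : Fin n → ℕ) (cb : ℕ)
    (l : Fin n) (hvl : v l ≠ 0)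
    (hw : ∀ j, v l * w j = v j)
    (hES1 : ∀ i j, v j ≠ 0 → hodX (v i) j < (((d j : ℤ) - (cb : ℤ) : ℤ) : WithBot ℤ))
    (hES3 : ∀ j, v j ≠ 0 → cb ≤ d j)
    (i : Fin n) (hci : c i ≤ cb)
    (hker : ∑ j, sysJacE f c d i j * v j = 0) :
    (∀ r, v r ≠ 0 → r ≠ l →
      v l * pderiv (some (Sum.inl (l, d l - c i)))
          (Dop^[cb - c i] (Yv r 0 + w r * Xv l (d l - cb))) = v r) ∧
    pderiv (some (Sum.inl (l, d l - c i)))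
      (MvPolynomial.aeval (substMap v w c d cb l i) (f i)) = 0 := by
  classical
  have hdl := hES3 l hvl
  have hv := fun q => hES1 q l hvl
  refine ⟨fun r _ _ => mul_pderiv_iterate_Dop_substitution hvl hw hv hdl hci r, ?_⟩
  set g := substMap v w c d cb l i
  refine (mul_eq_zero.mp ?_).resolve_left hvl
  calc v l * pderiv (xVar l (d l - c i)) (aeval g (f i))
      = ∑ r ∈ Finset.univ.filter (v · ≠ 0),
          aeval g (pderiv (xVar r (d r - c i)) (f i)) * (v l * pderiv _ (g (xVar r _))) := by
        rw [pderiv_aeval_substMap hvl, Finset.mul_sum]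
        exact Finset.sum_congr rfl fun r _ => mul_left_comm _ _ _
    _ = ∑ r ∈ Finset.univ.filter (v · ≠ 0), aeval g (sysJacE f c d i r * v r) :=
        Finset.sum_congr rfl fun r hmem => by
          have hr : v r ≠ 0 := (Finset.mem_filter.mp hmem).2
          rw [mul_pderiv_substMap_xVar hvl hw hv hdl hci hr, sysJacE,
            if_pos (hci.trans (hES3 r hr)), map_mul, aeval_substMap_of_hodX_lt (hES1 r) hci]
    _ = aeval g (∑ r, sysJacE f c d i r * v r) := by
        rw [map_sum]
        exact Finset.sum_filter_of_ne fun r _ h hr => h (by rw [hr, mul_zero, map_zero])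
    _ = 0 := by rw [hker, map_zero]

/-- **Kernel computation for the ES method.** Let `v ∈ ker J` with `v l ≠ 0`,
`w j` the quotients `v_j/v_l`, and `c i ≤ c̄`. By Griewank's Lemma the
substituted expression satisfies
`∂x_r^{(d_r - c_i)}/∂x_l^{(d_l - c_i)} = v_r/v_l`, and consequently the
substituted equation `f̄_i` satisfies `∂f̄_i/∂x_l^{(d_l - c_i)} = 0`. -/
theorem stmt12 {n : ℕ} (f v w : Fin n → EPoly n) (c d : Fin n → ℕ) (cb : ℕ)
    (l : Fin n) (hvl : v l ≠ 0)
    (hw : ∀ j, v l * w j = v j)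
    (hσ : ∀ i j, hodX (f i) j ≤ (((d j : ℤ) - (c i : ℤ) : ℤ) : WithBot ℤ))
    (hfY : ∀ i r', hodY (f i) r' = ⊥)
    (hvY : ∀ i r', hodY (v i) r' = ⊥)
    (hES1 : ∀ i j, v j ≠ 0 → hodX (v i) j < (((d j : ℤ) - (cb : ℤ) : ℤ) : WithBot ℤ))
    (hES2 : ∀ i j, v j = 0 → hodX (v i) j ≤ (((d j : ℤ) - (cb : ℤ) : ℤ) : WithBot ℤ))
    (hES3 : ∀ j, v j ≠ 0 → cb ≤ d j)
    (i : Fin n) (hci : c i ≤ cb)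
    (hker : ∑ j, sysJacE f c d i j * v j = 0) :
    (∀ r, v r ≠ 0 → r ≠ l →
      v l * pderiv (some (Sum.inl (l, d l - c i)))
          (Dop^[cb - c i] (Yv r 0 + w r * Xv l (d l - cb))) = v r) ∧
    pderiv (some (Sum.inl (l, d l - c i)))
      (MvPolynomial.aeval (substMap v w c d cb l i) (f i)) = 0 :=
  stmt12_general f v w c d cb l hvl hw hES1 hES3 i hci hker
end
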